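/- The following beta rule for machine values is admissible in CAU⁻σ: (q ▷ ⌊(λM̂)[e]⌋) applied to (q' ▷ C) reduces in zero or more CAU⁻σ steps to t(app(q,q'); β) ▷ ⌊M̂[(r ▷ C)·e]⌋. -/

import Mathlib

namespace CAU

/-! ## CAU⁻ syntax (de Bruijn, pure: no explicit operators) -/

/-- Trails of CAU⁻. -/
inductive NTr : Type
  | r : NTr
  | t : NTr → NTr → NTr
  | pb : NTr                      -- β
  | pbb : NTr                     -- β!
  | ti : NTr
  | lam : NTr → NTr
  | ap : NTr → NTr → NTr
  | lets : NTr → NTr → NTr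
  | tb : (Fin 9 → NTr) → NTr
  deriving Inhabited

/-- Terms of CAU⁻ (de Bruijn indices). -/
inductive NTm : Type
  | var : ℕ → NTm
  | lam : NTm → NTm
  | ap : NTm → NTm → NTm
  | lets : NTm → NTm → NTm
  | bang : NTr → NTm → NTm
  | ann : NTr → NTm → NTm         -- q ▷ M
  | insp : (Fin 9 → NTm) → NTm    -- ι(ϑ)
  deriving Inhabited

/-- Permutation (τ) reduction on CAU⁻ trails, closed under arbitrary contexts. -/
inductive TStepQ : NTr → NTr → Prop
  | tReflR (q) : TStepQ (.t q .r) q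
  | tReflL (q) : TStepQ (.t .r q) q
  | tbRefl : TStepQ (.tb fun _ => .r) .r
  | apRefl : TStepQ (.ap .r .r) .r
  | lamRefl : TStepQ (.lam .r) .r
  | letsRefl : TStepQ (.lets .r .r) .r
  | tAssoc (q₁ q₂ q₃) : TStepQ (.t (.t q₁ q₂) q₃) (.t q₁ (.t q₂ q₃))
  | tLam (q q') : TStepQ (.t (.lam q) (.lam q')) (.lam (.t q q'))
  | tLamT (q₁ q₁' q) :
      TStepQ (.t (.lam q₁) (.t (.lam q₁') q)) (.t (.lam (.t q₁ q₁')) q)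
  | tAp (q₁ q₂ q₁' q₂') :
      TStepQ (.t (.ap q₁ q₂) (.ap q₁' q₂')) (.ap (.t q₁ q₁') (.t q₂ q₂'))
  | tApT (q₁ q₂ q₁' q₂' q) :
      TStepQ (.t (.ap q₁ q₂) (.t (.ap q₁' q₂') q)) (.t (.ap (.t q₁ q₁') (.t q₂ q₂')) q)
  | tLets (q₁ q₂ q₁' q₂') :
      TStepQ (.t (.lets q₁ q₂) (.lets q₁' q₂')) (.lets (.t q₁ q₁') (.t q₂ q₂'))
  | tLetsT (q₁ q₂ q₁' q₂' q) :
      TStepQ (.t (.lets q₁ q₂) (.t (.lets q₁' q₂') q)) (.t (.lets (.t q₁ q₁') (.t q₂ q₂')) q)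
  | tTb (ζ₁ ζ₂) : TStepQ (.t (.tb ζ₁) (.tb ζ₂)) (.tb fun i => .t (ζ₁ i) (ζ₂ i))
  | tTbT (ζ₁ ζ₂ q) :
      TStepQ (.t (.tb ζ₁) (.t (.tb ζ₂) q)) (.t (.tb fun i => .t (ζ₁ i) (ζ₂ i)) q)
  | tL {q q''} (q') : TStepQ q q'' → TStepQ (.t q q') (.t q'' q')
  | tR {q' q''} (q) : TStepQ q' q'' → TStepQ (.t q q') (.t q q'')
  | lamC {q q'} : TStepQ q q' → TStepQ (.lam q) (.lam q')
  | apL {q q''} (q') : TStepQ q q'' → TStepQ (.ap q q') (.ap q'' q')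
  | apR {q' q''} (q) : TStepQ q' q'' → TStepQ (.ap q q') (.ap q q'')
  | letsL {q q''} (q') : TStepQ q q'' → TStepQ (.lets q q') (.lets q'' q')
  | letsR {q' q''} (q) : TStepQ q' q'' → TStepQ (.lets q q') (.lets q q'')
  | tbC {ζ} (i : Fin 9) {q'} : TStepQ (ζ i) q' →
      TStepQ (.tb ζ) (.tb (Function.update ζ i q'))

/-- Permutation (τ) reduction on CAU⁻ terms, closed under arbitrary contexts. -/
inductive TStepN : NTm → NTm → Prop
  | annRefl (M) : TStepN (.ann .r M) M
  | annAnn (q q' M) : TStepN (.ann q (.ann q' M)) (.ann (.t q q') M)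
  | bangAnn (q q' M) : TStepN (.bang q (.ann q' M)) (.bang (.t q q') M)
  | lamAnn (q M) : TStepN (.lam (.ann q M)) (.ann (.lam q) (.lam M))
  | apAnnL (q M N) : TStepN (.ap (.ann q M) N) (.ann (.ap q .r) (.ap M N))
  | apAnnR (q M N) : TStepN (.ap M (.ann q N)) (.ann (.ap .r q) (.ap M N))
  | letsAnnL (q M N) : TStepN (.lets (.ann q M) N) (.ann (.lets q .r) (.lets M N))
  | letsAnnR (q M N) : TStepN (.lets M (.ann q N)) (.ann (.lets .r q) (.lets M N))
  | inspAnn (ϑ : Fin 9 → NTm) (i : Fin 9) (q M) : ϑ i = .ann q M →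
      TStepN (.insp ϑ)
        (.ann (.tb (Function.update (fun _ => NTr.r) i q)) (.insp (Function.update ϑ i M)))
  | lamC {M M'} : TStepN M M' → TStepN (.lam M) (.lam M')
  | apL {M M'} (N) : TStepN M M' → TStepN (.ap M N) (.ap M' N)
  | apR {N N'} (M) : TStepN N N' → TStepN (.ap M N) (.ap M N')
  | letsL {M M'} (N) : TStepN M M' → TStepN (.lets M N) (.lets M' N)
  | letsR {N N'} (M) : TStepN N N' → TStepN (.lets M N) (.lets M N')
  | bangQ {q q'} (M) : TStepQ q q' → TStepN (.bang q M) (.bang q' M)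
  | bangM {M M'} (q) : TStepN M M' → TStepN (.bang q M) (.bang q M')
  | annQ {q q'} (M) : TStepQ q q' → TStepN (.ann q M) (.ann q' M)
  | annM {M M'} (q) : TStepN M M' → TStepN (.ann q M) (.ann q M')
  | inspC {ϑ} (i : Fin 9) {M'} : TStepN (ϑ i) M' →
      TStepN (.insp ϑ) (.insp (Function.update ϑ i M'))

end CAU

/-! ## CAU⁻σ syntax: explicit substitutions and explicit trail projections -/

namespace CAU

mutual
  /-- Terms of CAU⁻σ. -/
  inductive Tm : Type
    | one : Tm                               -- de Bruijn index 1
    | lam : Tm → Tm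
    | ap : Tm → Tm → Tm
    | lets : Tm → Tm → Tm
    | bang : Tr → Tm → Tm
    | ann : Tr → Tm → Tm                     -- q ▷ M
    | insp : (Fin 9 → Tm) → Tm               -- ι(ϑ)
    | sub : Tm → Sb → Tm                     -- closure M[s]
    | er : Tm → Tm                           -- explicit trail erasure ⌊M⌋
  /-- Trails of CAU⁻σ. -/
  inductive Tr : Type
    | r : Tr
    | t : Tr → Tr → Tr
    | pb : Tr                                -- β
    | pbb : Tr                               -- β!
    | ti : Tr
    | lam : Tr → Tr
    | ap : Tr → Tr → Tr
    | lets : Tr → Tr → Tr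
    | tb : (Fin 9 → Tr) → Tr
    | ext : Tm → Tr                          -- explicit trail extraction ⌈M⌉
  /-- Explicit substitutions of CAU⁻σ. -/
  inductive Sb : Type
    | id : Sb                                -- ⟨⟩
    | sh : Sb                                -- ↑
    | cons : Tm → Sb → Sb                    -- M · s
    | comp : Sb → Sb → Sb                    -- s ∘ t
end

instance : Inhabited Tm := ⟨Tm.one⟩
instance : Inhabited Tr := ⟨Tr.r⟩
instance : Inhabited Sb := ⟨Sb.id⟩

/-- `pow n` is the iterated lift `↑^(n+1)`. -/
def pow : ℕ → Sb
  | 0 => .sh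
  | n + 1 => .comp .sh (pow n)

mutual
  /-- σ∪τ one-step reduction on CAU⁻σ terms (closed under arbitrary contexts). -/
  inductive StepT : Tm → Tm → Prop
    -- σ-rules for explicit substitutions
    | subOneId : StepT (.sub .one .id) .one
    | subOneCons (M s) : StepT (.sub .one (.cons M s)) M
    | subLam (M s) : StepT (.sub (.lam M) s) (.lam (.sub M (.cons .one (.comp s .sh))))
    | subAp (M N s) : StepT (.sub (.ap M N) s) (.ap (.sub M s) (.sub N s))
    | subBang (q M s) : StepT (.sub (.bang q M) s) (.bang q (.sub M s))
    | subLets (M N s) :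
        StepT (.sub (.lets M N) s) (.lets (.sub M s) (.sub N (.cons .one (.comp s .sh))))
    | subAnn (q M s) : StepT (.sub (.ann q M) s) (.ann q (.sub M s))
    | subInsp (ϑ s) : StepT (.sub (.insp ϑ) s) (.insp fun i => .sub (ϑ i) s)
    | subSub (M s t) : StepT (.sub (.sub M s) t) (.sub M (.comp s t))
    -- σ-rules for explicit trail erasure
    | erOne : StepT (.er .one) .one
    | erOneSh (n) : StepT (.er (.sub .one (pow n))) (.sub .one (pow n))
    | erLam (M) : StepT (.er (.lam M)) (.lam (.er M))
    | erAp (M N) : StepT (.er (.ap M N)) (.ap (.er M) (.er N))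
    | erBang (q M) : StepT (.er (.bang q M)) (.bang q M)
    | erLets (M N) : StepT (.er (.lets M N)) (.lets (.er M) (.er N))
    | erAnn (q M) : StepT (.er (.ann q M)) (.er M)
    | erInsp (ϑ) : StepT (.er (.insp ϑ)) (.insp fun i => .er (ϑ i))
    -- τ-rules on terms
    | annRefl (M) : StepT (.ann .r M) M
    | annAnn (q q' M) : StepT (.ann q (.ann q' M)) (.ann (.t q q') M)
    | bangAnn (q q' M) : StepT (.bang q (.ann q' M)) (.bang (.t q q') M)
    | lamAnn (q M) : StepT (.lam (.ann q M)) (.ann (.lam q) (.lam M))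
    | apAnnL (q M N) : StepT (.ap (.ann q M) N) (.ann (.ap q .r) (.ap M N))
    | apAnnR (q M N) : StepT (.ap M (.ann q N)) (.ann (.ap .r q) (.ap M N))
    | letsAnnL (q M N) : StepT (.lets (.ann q M) N) (.ann (.lets q .r) (.lets M N))
    | letsAnnR (q M N) : StepT (.lets M (.ann q N)) (.ann (.lets .r q) (.lets M N))
    | inspAnn (ϑ : Fin 9 → Tm) (i : Fin 9) (q M) : ϑ i = .ann q M →
        StepT (.insp ϑ)
          (.ann (.tb (Function.update (fun _ => Tr.r) i q)) (.insp (Function.update ϑ i M)))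
    -- congruence closure
    | lamC {M M'} : StepT M M' → StepT (.lam M) (.lam M')
    | apL {M M'} (N) : StepT M M' → StepT (.ap M N) (.ap M' N)
    | apR {N N'} (M) : StepT N N' → StepT (.ap M N) (.ap M N')
    | letsL {M M'} (N) : StepT M M' → StepT (.lets M N) (.lets M' N)
    | letsR {N N'} (M) : StepT N N' → StepT (.lets M N) (.lets M N')
    | bangQ {q q'} (M) : StepQ q q' → StepT (.bang q M) (.bang q' M)
    | bangM {M M'} (q) : StepT M M' → StepT (.bang q M) (.bang q M')
    | annQ {q q'} (M) : StepQ q q' → StepT (.ann q M) (.ann q' M)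
    | annM {M M'} (q) : StepT M M' → StepT (.ann q M) (.ann q M')
    | inspC {ϑ} (i : Fin 9) {M'} : StepT (ϑ i) M' →
        StepT (.insp ϑ) (.insp (Function.update ϑ i M'))
    | subM {M M'} (s) : StepT M M' → StepT (.sub M s) (.sub M' s)
    | subS {s s'} (M) : StepS s s' → StepT (.sub M s) (.sub M s')
    | erC {M M'} : StepT M M' → StepT (.er M) (.er M')
  /-- σ∪τ one-step reduction on CAU⁻σ trails. -/
  inductive StepQ : Tr → Tr → Prop
    -- σ-rules for explicit trail extraction
    | extOne : StepQ (.ext .one) .r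
    | extOneSh (n) : StepQ (.ext (.sub .one (pow n))) .r
    | extLam (M) : StepQ (.ext (.lam M)) (.lam (.ext M))
    | extAp (M N) : StepQ (.ext (.ap M N)) (.ap (.ext M) (.ext N))
    | extBang (q M) : StepQ (.ext (.bang q M)) .r
    | extLets (M N) : StepQ (.ext (.lets M N)) (.lets (.ext M) (.ext N))
    | extAnn (q M) : StepQ (.ext (.ann q M)) (.t q (.ext M))
    | extInsp (ϑ) : StepQ (.ext (.insp ϑ)) (.tb fun i => .ext (ϑ i))
    -- τ-rules on trails
    | tReflR (q) : StepQ (.t q .r) q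
    | tReflL (q) : StepQ (.t .r q) q
    | tbRefl : StepQ (.tb fun _ => .r) .r
    | apRefl : StepQ (.ap .r .r) .r
    | lamRefl : StepQ (.lam .r) .r
    | letsRefl : StepQ (.lets .r .r) .r
    | tAssoc (q₁ q₂ q₃) : StepQ (.t (.t q₁ q₂) q₃) (.t q₁ (.t q₂ q₃))
    | tLam (q q') : StepQ (.t (.lam q) (.lam q')) (.lam (.t q q'))
    | tLamT (q₁ q₁' q) :
        StepQ (.t (.lam q₁) (.t (.lam q₁') q)) (.t (.lam (.t q₁ q₁')) q)
    | tAp (q₁ q₂ q₁' q₂') :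
        StepQ (.t (.ap q₁ q₂) (.ap q₁' q₂')) (.ap (.t q₁ q₁') (.t q₂ q₂'))
    | tApT (q₁ q₂ q₁' q₂' q) :
        StepQ (.t (.ap q₁ q₂) (.t (.ap q₁' q₂') q)) (.t (.ap (.t q₁ q₁') (.t q₂ q₂')) q)
    | tLets (q₁ q₂ q₁' q₂') :
        StepQ (.t (.lets q₁ q₂) (.lets q₁' q₂')) (.lets (.t q₁ q₁') (.t q₂ q₂'))
    | tLetsT (q₁ q₂ q₁' q₂' q) :
        StepQ (.t (.lets q₁ q₂) (.t (.lets q₁' q₂') q)) (.t (.lets (.t q₁ q₁') (.t q₂ q₂')) q)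
    | tTb (ζ₁ ζ₂) : StepQ (.t (.tb ζ₁) (.tb ζ₂)) (.tb fun i => .t (ζ₁ i) (ζ₂ i))
    | tTbT (ζ₁ ζ₂ q) :
        StepQ (.t (.tb ζ₁) (.t (.tb ζ₂) q)) (.t (.tb fun i => .t (ζ₁ i) (ζ₂ i)) q)
    -- congruence closure
    | tL {q q''} (q') : StepQ q q'' → StepQ (.t q q') (.t q'' q')
    | tR {q' q''} (q) : StepQ q' q'' → StepQ (.t q q') (.t q q'')
    | lamC {q q'} : StepQ q q' → StepQ (.lam q) (.lam q')
    | apL {q q''} (q') : StepQ q q'' → StepQ (.ap q q') (.ap q'' q')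
    | apR {q' q''} (q) : StepQ q' q'' → StepQ (.ap q q') (.ap q q'')
    | letsL {q q''} (q') : StepQ q q'' → StepQ (.lets q q') (.lets q'' q')
    | letsR {q' q''} (q) : StepQ q' q'' → StepQ (.lets q q') (.lets q q'')
    | tbC {ζ} (i : Fin 9) {q'} : StepQ (ζ i) q' → StepQ (.tb ζ) (.tb (Function.update ζ i q'))
    | extC {M M'} : StepT M M' → StepQ (.ext M) (.ext M')
  /-- σ one-step reduction on CAU⁻σ substitutions. -/
  inductive StepS : Sb → Sb → Prop
    | idComp (s) : StepS (.comp .id s) s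
    | shId : StepS (.comp .sh .id) .sh
    | shCons (M s) : StepS (.comp .sh (.cons M s)) s
    | consComp (M s t) : StepS (.comp (.cons M s) t) (.cons (.sub M t) (.comp s t))
    | compAssoc (s₁ s₂ s₃) : StepS (.comp (.comp s₁ s₂) s₃) (.comp s₁ (.comp s₂ s₃))
    | consM {M M'} (s) : StepT M M' → StepS (.cons M s) (.cons M' s)
    | consS {s s'} (M) : StepS s s' → StepS (.cons M s) (.cons M s')
    | compL {s s''} (t) : StepS s s'' → StepS (.comp s t) (.comp s'' t)
    | compR {t t'} (s) : StepS t t' → StepS (.comp s t) (.comp s t')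
end

/-- στ-normal terms. -/
def NormalT (M : Tm) : Prop := ∀ N, ¬ StepT M N
/-- στ-normal trails. -/
def NormalQ (q : Tr) : Prop := ∀ q', ¬ StepQ q q'
/-- σ-normal substitutions. -/
def NormalS (s : Sb) : Prop := ∀ t, ¬ StepS s t

/-- `nf` is a στ-normal-form function for terms. -/
def IsNFT (nf : Tm → Tm) : Prop :=
  ∀ M, Relation.ReflTransGen StepT M (nf M) ∧ NormalT (nf M)
/-- `nfq` is a στ-normal-form function for trails. -/
def IsNFQ (nfq : Tr → Tr) : Prop :=
  ∀ q, Relation.ReflTransGen StepQ q (nfq q) ∧ NormalQ (nfq q)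
/-- `nfs` is a σ-normal-form function for substitutions. -/
def IsNFS (nfs : Sb → Sb) : Prop :=
  ∀ s, Relation.ReflTransGen StepS s (nfs s) ∧ NormalS (nfs s)

end CAU
namespace CAU

/-! ## Grammar of στ-normal forms -/

mutual
  /-- Grammar of στ-normal CAU⁻σ terms. -/
  inductive GTm : Tm → Prop
    | one : GTm .one
    | oneSh (n) : GTm (.sub .one (pow n))
    | lam {M} : GTm M → GTm (.lam M)
    | ap {M N} : GTm M → GTm N → GTm (.ap M N)
    | lets {M N} : GTm M → GTm N → GTm (.lets M N)
    | bang {q M} : GTr q → GTm M → GTm (.bang q M)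
    | ann {q M} : GTr q → GTm M → GTm (.ann q M)
    | insp {ϑ} : (∀ i, GTm (ϑ i)) → GTm (.insp ϑ)
  /-- Grammar of στ-normal CAU⁻σ trails. -/
  inductive GTr : Tr → Prop
    | r : GTr .r
    | t {q q'} : GTr q → GTr q' → GTr (.t q q')
    | pb : GTr .pb
    | pbb : GTr .pbb
    | ti : GTr .ti
    | lam {q} : GTr q → GTr (.lam q)
    | ap {q q'} : GTr q → GTr q' → GTr (.ap q q')
    | lets {q q'} : GTr q → GTr q' → GTr (.lets q q')
    | tb {ζ} : (∀ i, GTr (ζ i)) → GTr (.tb ζ)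
end

/-- Grammar of σ-normal CAU⁻σ substitutions. -/
inductive GSb : Sb → Prop
  | id : GSb .id
  | shn (n) : GSb (pow n)
  | cons {M s} : GTm M → GSb s → GSb (.cons M s)

/-! ## Focused forms and meta-level projections -/

/-- Meta-level trail erasure ⌊M⌋*, relative to a normal form function. -/
def metaErase (nf : Tm → Tm) (M : Tm) : Tm :=
  match nf M with
  | .ann _ M' => M'
  | N => N

/-- Meta-level trail extraction ⌈M⌉*, relative to a normal form function. -/
def metaExt (nf : Tm → Tm) (M : Tm) : Tr :=
  match nf M with
  | .ann q _ => q
  | _ => .r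

/-- The focused form ⟨M⟩ = ⌈M⌉* ▷ ⌊M⌋*. -/
def focusT (nf : Tm → Tm) (M : Tm) : Tm := .ann (metaExt nf M) (metaErase nf M)

/-- Focusing a σ-normal substitution pointwise. -/
def focusSb (nf : Tm → Tm) : Sb → Sb
  | .cons M s => .cons (focusT nf M) (focusSb nf s)
  | s => s

end CAU
namespace CAU

/-! ## Embedding pure (σ-normal) terms into CAU⁻σ -/

/-- Embedding of pure trails. -/
def toTr : NTr → Tr
  | .r => .r
  | .t q q' => .t (toTr q) (toTr q')
  | .pb => .pb
  | .pbb => .pbb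
  | .ti => .ti
  | .lam q => .lam (toTr q)
  | .ap q q' => .ap (toTr q) (toTr q')
  | .lets q q' => .lets (toTr q) (toTr q')
  | .tb ζ => .tb fun i => toTr (ζ i)

/-- Embedding of pure terms: de Bruijn index `var n` (0-based) becomes `1[↑ⁿ]`. -/
def toTm : NTm → Tm
  | .var 0 => .one
  | .var (n+1) => .sub .one (pow n)
  | .lam M => .lam (toTm M)
  | .ap M N => .ap (toTm M) (toTm N)
  | .lets M N => .lets (toTm M) (toTm N)
  | .bang q M => .bang (toTr q) (toTm M)
  | .ann q M => .ann (toTr q) (toTm M)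
  | .insp ϑ => .insp fun i => toTm (ϑ i)

/-- `shiftP p` is the substitution `↑ᵖ` (with `↑⁰ = ⟨⟩`). -/
def shiftP : ℕ → Sb
  | 0 => .id
  | n + 1 => pow n

/-- The substitution `N₁ · … · N_k · ↑ᵖ`. -/
def mkSub : List Tm → ℕ → Sb
  | [], p => shiftP p
  | M :: l, p => .cons M (mkSub l p)

/-! ## Meta-level substitution on pure terms -/

/-- Lift by one all free indices ≥ d. -/
def liftN (d : ℕ) : NTm → NTm
  | .var n => if n < d then .var n else .var (n + 1)
  | .lam M => .lam (liftN (d+1) M)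
  | .ap M N => .ap (liftN d M) (liftN d N)
  | .lets M N => .lets (liftN d M) (liftN d (N))
  | .bang q M => .bang q (liftN d M)
  | .ann q M => .ann q (liftN d M)
  | .insp ϑ => .insp fun i => liftN d (ϑ i)

/-- Meta-level simultaneous substitution `M{N⃗}ₚ` on pure terms. -/
def msubst : NTm → ℕ → List NTm → NTm
  | .var n, p, l => if h : n < l.length then l.get ⟨n, h⟩ else .var (n - l.length + p)
  | .lam M, p, l => .lam (msubst M (p+1) (.var 0 :: l.map (liftN 0)))
  | .ap M N, p, l => .ap (msubst M p l) (msubst N p l)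
  | .lets M N, p, l => .lets (msubst M p l) (msubst N (p+1) (.var 0 :: l.map (liftN 0)))
  | .bang q M, p, l => .bang q (msubst M p l)
  | .ann q M, p, l => .ann q (msubst M p l)
  | .insp ϑ, p, l => .insp fun i => msubst (ϑ i) p l

/-! ## Trail inspection: structural recursion qϑ over trails -/

/-- Structural recursion `qϑ` over a pure trail, applying the nine inspection branches. -/
def recTrailN : NTr → (Fin 9 → NTm) → NTm
  | .r, ϑ => ϑ 0
  | .t q q', ϑ => .ap (.ap (ϑ 1) (recTrailN q ϑ)) (recTrailN q' ϑ)
  | .pb, ϑ => ϑ 2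
  | .pbb, ϑ => ϑ 3
  | .ti, ϑ => ϑ 4
  | .lam q, ϑ => .ap (ϑ 5) (recTrailN q ϑ)
  | .ap q q', ϑ => .ap (.ap (ϑ 6) (recTrailN q ϑ)) (recTrailN q' ϑ)
  | .lets q q', ϑ => .ap (.ap (ϑ 7) (recTrailN q ϑ)) (recTrailN q' ϑ)
  | .tb ζ, ϑ => (List.ofFn fun i => recTrailN (ζ i) ϑ).foldl .ap (ϑ 8)

/-- Structural recursion `qϑ` over a CAU⁻σ trail (junk value on explicit extractions,
which cannot occur in the στ-normal trails it is applied to). -/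
def recTrailT : Tr → (Fin 9 → Tm) → Tm
  | .r, ϑ => ϑ 0
  | .t q q', ϑ => .ap (.ap (ϑ 1) (recTrailT q ϑ)) (recTrailT q' ϑ)
  | .pb, ϑ => ϑ 2
  | .pbb, ϑ => ϑ 3
  | .ti, ϑ => ϑ 4
  | .lam q, ϑ => .ap (ϑ 5) (recTrailT q ϑ)
  | .ap q q', ϑ => .ap (.ap (ϑ 6) (recTrailT q ϑ)) (recTrailT q' ϑ)
  | .lets q q', ϑ => .ap (.ap (ϑ 7) (recTrailT q ϑ)) (recTrailT q' ϑ)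
  | .tb ζ, ϑ => (List.ofFn fun i => recTrailT (ζ i) ϑ).foldl .ap (ϑ 8)
  | .ext _, ϑ => ϑ 0

/-! ## Meta-level β-reduction on pure (σ-normal) terms -/

/-- One inspection step in a bang-free context of a pure term:
some `ι(ϑ)` not guarded by a bang is replaced by `ti ▷ qϑ`. -/
inductive FInspN (q : NTr) : NTm → NTm → Prop
  | insp (ϑ) : FInspN q (.insp ϑ) (.ann .ti (recTrailN q ϑ))
  | lam {M M'} : FInspN q M M' → FInspN q (.lam M) (.lam M')
  | apL {M M'} (N) : FInspN q M M' → FInspN q (.ap M N) (.ap M' N)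
  | apR {N N'} (M) : FInspN q N N' → FInspN q (.ap M N) (.ap M N')
  | letsL {M M'} (N) : FInspN q M M' → FInspN q (.lets M N) (.lets M' N)
  | letsR {N N'} (M) : FInspN q N N' → FInspN q (.lets M N) (.lets M N')
  | ann {M M'} (q') : FInspN q M M' → FInspN q (.ann q' M) (.ann q' M')
  | inspC {ϑ} (i : Fin 9) {M'} : FInspN q (ϑ i) M' →
      FInspN q (.insp ϑ) (.insp (Function.update ϑ i M'))

/-- Meta-level β-reduction on pure (σ-normal) terms, closed under σ-normal contexts. -/
inductive BetaN : NTm → NTm → Prop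
  | beta (M N) : BetaN (.ap (.lam M) N) (.ann .pb (msubst M 0 [N]))
  | betaBang (q M N) : BetaN (.lets (.bang q M) N) (.ann .pbb (msubst N 0 [.ann q M]))
  | insp {q M M'} : FInspN q M M' → BetaN (.bang q M) (.bang q M')
  | lam {M M'} : BetaN M M' → BetaN (.lam M) (.lam M')
  | apL {M M'} (N) : BetaN M M' → BetaN (.ap M N) (.ap M' N)
  | apR {N N'} (M) : BetaN N N' → BetaN (.ap M N) (.ap M N')
  | letsL {M M'} (N) : BetaN M M' → BetaN (.lets M N) (.lets M' N)
  | letsR {N N'} (M) : BetaN N N' → BetaN (.lets M N) (.lets M N')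
  | bang {M M'} (q) : BetaN M M' → BetaN (.bang q M) (.bang q M')
  | ann {M M'} (q) : BetaN M M' → BetaN (.ann q M) (.ann q M')
  | inspC {ϑ} (i : Fin 9) {M'} : BetaN (ϑ i) M' →
      BetaN (.insp ϑ) (.insp (Function.update ϑ i M'))

/-! ## Lazy Beta-reduction of CAU⁻σ -/

/-- One inspection step in a context whose hole is not inside a bang, a substitution,
or an erasure: some `ι(ϑ)` is replaced by `ti ▷ qϑ`. -/
inductive FInspT (q : Tr) : Tm → Tm → Prop
  | insp (ϑ) : FInspT q (.insp ϑ) (.ann .ti (recTrailT q ϑ))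
  | lam {M M'} : FInspT q M M' → FInspT q (.lam M) (.lam M')
  | apL {M M'} (N) : FInspT q M M' → FInspT q (.ap M N) (.ap M' N)
  | apR {N N'} (M) : FInspT q N N' → FInspT q (.ap M N) (.ap M N')
  | letsL {M M'} (N) : FInspT q M M' → FInspT q (.lets M N) (.lets M' N)
  | letsR {N N'} (M) : FInspT q N N' → FInspT q (.lets M N) (.lets M N')
  | ann {M M'} (q') : FInspT q M M' → FInspT q (.ann q' M) (.ann q' M')
  | inspC {ϑ} (i : Fin 9) {M'} : FInspT q (ϑ i) M' →
      FInspT q (.insp ϑ) (.insp (Function.update ϑ i M'))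

mutual
  /-- The lazy Beta-relation of CAU⁻σ (relative to a normal form function `nfq`
  for trails, used in the trail inspection rule), closed under evaluation contexts
  `E_σ` whose hole does not occur inside an erasure. -/
  inductive LBeta (nfq : Tr → Tr) : Tm → Tm → Prop
    | beta (M N) :
        LBeta nfq (.ap (.lam M) N)
          (.ann (.t (.ap (.lam (.ext M)) (.ext N)) .pb) (.sub (.er M) (.cons (.er N) .id)))
    | betaBang (q M N) :
        LBeta nfq (.lets (.bang q M) N)
          (.ann (.t (.lets .r (.ext N)) .pbb) (.sub (.er N) (.cons (.ann q M) .id)))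
    | insp {q M M'} : FInspT (nfq (.t q (.ext M))) M M' →
        LBeta nfq (.bang q M) (.bang q M')
    | lam {M M'} : LBeta nfq M M' → LBeta nfq (.lam M) (.lam M')
    | apL {M M'} (N) : LBeta nfq M M' → LBeta nfq (.ap M N) (.ap M' N)
    | apR {N N'} (M) : LBeta nfq N N' → LBeta nfq (.ap M N) (.ap M N')
    | letsL {M M'} (N) : LBeta nfq M M' → LBeta nfq (.lets M N) (.lets M' N)
    | letsR {N N'} (M) : LBeta nfq N N' → LBeta nfq (.lets M N) (.lets M N')
    | bang {M M'} (q) : LBeta nfq M M' → LBeta nfq (.bang q M) (.bang q M')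
    | ann {M M'} (q) : LBeta nfq M M' → LBeta nfq (.ann q M) (.ann q M')
    | inspC {ϑ} (i : Fin 9) {M'} : LBeta nfq (ϑ i) M' →
        LBeta nfq (.insp ϑ) (.insp (Function.update ϑ i M'))
    | subM {M M'} (s) : LBeta nfq M M' → LBeta nfq (.sub M s) (.sub M' s)
    | subS {s s'} (M) : LBetaSub nfq s s' → LBeta nfq (.sub M s) (.sub M s')
  /-- Lazy Beta-reduction inside substitutions. -/
  inductive LBetaSub (nfq : Tr → Tr) : Sb → Sb → Prop
    | consM {M M'} (s) : LBeta nfq M M' → LBetaSub nfq (.cons M s) (.cons M' s)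
    | consS {s s'} (M) : LBetaSub nfq s s' → LBetaSub nfq (.cons M s) (.cons M s')
    | compL {s s''} (t) : LBetaSub nfq s s'' → LBetaSub nfq (.comp s t) (.comp s'' t)
    | compR {t t'} (s) : LBetaSub nfq t t' → LBetaSub nfq (.comp s t) (.comp s t')
end

/-- CAU⁻σ reduction: the union of Beta-reduction and στ-equivalence. -/
def SRed (nfq : Tr → Tr) (M N : Tm) : Prop :=
  LBeta nfq M N ∨ Relation.EqvGen StepT M N

/-! ## Naive (eager) CAU⁻ reduction on στ-normal terms -/

/-- A principal contraction in the style of CAU⁻ (using an explicit substitution for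
the redex, to be normalized away immediately afterwards), closed under arbitrary
CAU⁻ contexts. -/
inductive NaiveBeta : Tm → Tm → Prop
  | beta (M N) : NaiveBeta (.ap (.lam M) N) (.ann .pb (.sub M (.cons N .id)))
  | betaBang (q M N) :
      NaiveBeta (.lets (.bang q M) N) (.ann .pbb (.sub N (.cons (.ann q M) .id)))
  | insp {q M M'} : FInspT q M M' → NaiveBeta (.bang q M) (.bang q M')
  | lam {M M'} : NaiveBeta M M' → NaiveBeta (.lam M) (.lam M')
  | apL {M M'} (N) : NaiveBeta M M' → NaiveBeta (.ap M N) (.ap M' N)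
  | apR {N N'} (M) : NaiveBeta N N' → NaiveBeta (.ap M N) (.ap M N')
  | letsL {M M'} (N) : NaiveBeta M M' → NaiveBeta (.lets M N) (.lets M' N)
  | letsR {N N'} (M) : NaiveBeta N N' → NaiveBeta (.lets M N) (.lets M N')
  | bang {M M'} (q) : NaiveBeta M M' → NaiveBeta (.bang q M) (.bang q M')
  | ann {M M'} (q) : NaiveBeta M M' → NaiveBeta (.ann q M) (.ann q M')
  | inspC {ϑ} (i : Fin 9) {M'} : NaiveBeta (ϑ i) M' →
      NaiveBeta (.insp ϑ) (.insp (Function.update ϑ i M'))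

/-- One step of CAU⁻ reduction: a principal contraction followed by normalization. -/
def CRed (nf : Tm → Tm) (M N : Tm) : Prop := ∃ R, NaiveBeta M R ∧ N = nf R

/-! ## The eager β̄-reduction on focused forms -/

/-- β̄-reduction: the relation on focused forms induced by meta-level β on pure terms. -/
def BbarT (nf : Tm → Tm) (A B : Tm) : Prop :=
  ∃ M N : NTm, BetaN M N ∧ A = focusT nf (toTm M) ∧ B = focusT nf (toTm N)

/-- Focusing of a σ-normal substitution `N⃗ · ↑ᵖ` given by a list of pure terms. -/
def focusNSub (nf : Tm → Tm) (l : List NTm) (p : ℕ) : Sb :=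
  mkSub (l.map fun M => focusT nf (toTm M)) p

/-- β̄-reduction on focused substitutions: one component β-reduces. -/
def BbarS (nf : Tm → Tm) (A B : Sb) : Prop :=
  ∃ (l : List NTm) (p : ℕ) (i : ℕ) (h : i < l.length) (N' : NTm),
    BetaN (l.get ⟨i, h⟩) N' ∧ A = focusNSub nf l p ∧ B = focusNSub nf (l.set i N') p

/-- One-hole σ-normal contexts over pure terms. -/
inductive NCtx : Type
  | hole : NCtx
  | lam : NCtx → NCtx
  | apL : NCtx → NTm → NCtx
  | apR : NTm → NCtx → NCtx
  | letsL : NCtx → NTm → NCtx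
  | letsR : NTm → NCtx → NCtx
  | bang : NTr → NCtx → NCtx
  | ann : NTr → NCtx → NCtx
  | insp : (Fin 9 → NTm) → Fin 9 → NCtx → NCtx

/-- Filling the hole of a σ-normal context. -/
def fillN : NCtx → NTm → NTm
  | .hole, X => X
  | .lam C, X => .lam (fillN C X)
  | .apL C N, X => .ap (fillN C X) N
  | .apR M C, X => .ap M (fillN C X)
  | .letsL C N, X => .lets (fillN C X) N
  | .letsR M C, X => .lets M (fillN C X)
  | .bang q C, X => .bang q (fillN C X)
  | .ann q C, X => .ann q (fillN C X)
  | .insp ϑ i C, X => .insp (Function.update ϑ i (fillN C X))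

end CAU
namespace CAU

/-! ## The call-by-value abstract machine -/

mutual
  /-- Machine closures. -/
  inductive Clo : Type
    | lamC : NTm → Env → Clo          -- ⌊(λM̂)[e]⌋
    | bangC : Tr → Clo → Clo          -- !_q C
  /-- Machine values `q ▷ C`. -/
  inductive Val : Type
    | mk : Tr → Clo → Val
  /-- Machine environments: lists of values. -/
  inductive Env : Type
    | nil : Env
    | cons : Val → Env → Env
end

instance : Inhabited Clo := ⟨.lamC (.var 0) .nil⟩
instance : Inhabited Val := ⟨.mk .r default⟩
instance : Inhabited Env := ⟨.nil⟩

/-- The trail of a value. -/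
def Val.tr : Val → Tr | .mk q _ => q
/-- The closure of a value. -/
def Val.clo : Val → Clo | .mk _ C => C

/-- Length of an environment. -/
def envLen : Env → ℕ
  | .nil => 0
  | .cons _ e => envLen e + 1

/-- Environment lookup `e(n)`, returning the n-th closure (0-based). -/
def lookupE : Env → ℕ → Option Clo
  | .cons (.mk _ C) _, 0 => some C
  | .cons _ e, n + 1 => lookupE e n
  | .nil, _ => none

mutual
  /-- The CAU⁻σ term denoted by a closure. -/
  def cloToTm : Clo → Tm
    | .lamC M e => .er (.sub (.lam (toTm M)) (envToSub e))
    | .bangC q C => .bang q (cloToTm C)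
  /-- The CAU⁻σ term denoted by a value. -/
  def valToTm : Val → Tm
    | .mk q C => .ann q (cloToTm C)
  /-- The explicit substitution denoted by an environment. -/
  def envToSub : Env → Sb
    | .nil => .id
    | .cons V e => .cons (valToTm V) (envToSub e)
end

/-- Pure terms closed below depth `d` (all free indices < d). -/
def closedN (d : ℕ) : NTm → Prop
  | .var n => n < d
  | .lam M => closedN (d+1) M
  | .ap M N => closedN d M ∧ closedN d N
  | .lets M N => closedN d M ∧ closedN (d+1) N
  | .bang _ M => closedN d M
  | .ann _ M => closedN d M
  | .insp ϑ => ∀ i, closedN d (ϑ i)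

mutual
  /-- Closed closures. -/
  def closedClo : Clo → Prop
    | .lamC M e => closedN (envLen e + 1) M ∧ closedEnv e
    | .bangC _ C => closedClo C
  /-- Closed values. -/
  def closedVal : Val → Prop
    | .mk _ C => closedClo C
  /-- Closed environments. -/
  def closedEnv : Env → Prop
    | .nil => True
    | .cons V e => closedVal V ∧ closedEnv e
end

/-- Machine codes: pure terms or fragments of abstract syntax tree. -/
inductive Code : Type
  | tm : NTm → Code
  | ap : Code
  | bg : Code
  | lt : NTm → Code
  | ins : Code

/-- Stack tuples `(q | κ | e)`. -/
structure Tup where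
  q : Tr
  κ : Code
  e : Env

instance : Inhabited Tup := ⟨⟨.r, .ap, .nil⟩⟩

/-- Stacks. -/
abbrev Stack := List Tup
/-- Dumps. -/
abbrev Dump := List Val
/-- Machine configurations. -/
abbrev Config := Stack × Dump

/-- The tuple for a pending inspection branch. -/
def brTup (x : Tr × NTm × Env) : Tup := ⟨x.1, .tm x.2.1, x.2.2⟩

mutual
  /-- Well-formed context configurations. -/
  inductive WfCtx : Stack → Dump → Prop
    | nil : WfCtx [] []
    | apTm {π D} (q q' M e) : WfCtx π D →
        WfCtx (⟨q, .tm M, e⟩ :: ⟨q', .ap, .nil⟩ :: π) D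
    | apVal {π D} (q V) : WfCtx π D → WfCtx (⟨q, .ap, .nil⟩ :: π) (V :: D)
    | lt {π D} (q M e) : WfCtx π D → WfCtx (⟨q, .lt M, e⟩ :: π) D
    | bg {π D} (q) : WfCtx π D → WfCtx (⟨q, .bg, .nil⟩ :: π) D
    | ins {π D} (q') (ts : List (Tr × NTm × Env)) (vs : List Val) :
        vs.length + ts.length = 8 → WfCtx π D →
        WfCtx (ts.map brTup ++ ⟨q', .ins, .nil⟩ :: π) (vs ++ D)
  /-- Well-formed term configurations. -/
  inductive WfTm : Stack → Dump → Prop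
    | fin (V) : WfTm [] [V]
    | tm {π D} (q M e) : WfCtx π D → WfTm (⟨q, .tm M, e⟩ :: π) D
    | ap {π D} (q V W) : WfCtx π D → WfTm (⟨q, .ap, .nil⟩ :: π) (W :: V :: D)
    | lt {π D} (q M e V) : WfCtx π D → WfTm (⟨q, .lt M, e⟩ :: π) (V :: D)
    | bg {π D} (q V) : WfCtx π D → WfTm (⟨q, .bg, .nil⟩ :: π) (V :: D)
    | ins {π D} (q) (vs : List Val) : vs.length = 9 → WfCtx π D →
        WfTm (⟨q, .ins, .nil⟩ :: π) (vs ++ D)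
end

/-- The term denoted by a pending-branch tuple. -/
def tupDen (x : Tr × NTm × Env) : Tm := .ann x.1 (.er (.sub (toTm x.2.1) (envToSub x.2.2)))

mutual
  /-- Denotation of context configurations as CAU⁻σ one-hole contexts. -/
  inductive CtxDen : Stack → Dump → (Tm → Tm) → Prop
    | nil : CtxDen [] [] id
    | apTm {π D E} (q q' M e) : CtxDen π D E →
        CtxDen (⟨q, .tm M, e⟩ :: ⟨q', .ap, .nil⟩ :: π) D
          (fun X => E (.ann q' (.ap X (.ann q (.er (.sub (toTm M) (envToSub e)))))))
    | apVal {π D E} (q V) : CtxDen π D E →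
        CtxDen (⟨q, .ap, .nil⟩ :: π) (V :: D) (fun X => E (.ann q (.ap (valToTm V) X)))
    | lt {π D E} (q N e) : CtxDen π D E →
        CtxDen (⟨q, .lt N, e⟩ :: π) D
          (fun X => E (.ann q (.lets X
            (.er (.sub (toTm N) (.cons .one (.comp (envToSub e) .sh)))))))
    | bg {π D E} (q) : CtxDen π D E →
        CtxDen (⟨q, .bg, .nil⟩ :: π) D (fun X => E (.ann q (.bang .r X)))
    | ins {π D E} (q') (ts : List (Tr × NTm × Env)) (vs : List Val) :
        vs.length + ts.length = 8 → CtxDen π D E →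
        CtxDen (ts.map brTup ++ ⟨q', .ins, .nil⟩ :: π) (vs ++ D)
          (fun X => E (.ann q' (.insp fun i =>
            if h : (i : ℕ) < vs.length then valToTm (vs.get ⟨i, h⟩)
            else if (i : ℕ) = vs.length then X
            else tupDen (ts.getD ((i : ℕ) - vs.length - 1) default))))
  /-- Denotation of term configurations as CAU⁻σ terms. -/
  inductive TmDen : Stack → Dump → Tm → Prop
    | fin (V) : TmDen [] [V] (valToTm V)
    | tm {π D E} (q M e) : CtxDen π D E →
        TmDen (⟨q, .tm M, e⟩ :: π) D (E (.ann q (.er (.sub (toTm M) (envToSub e)))))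
    | ap {π D E} (q V W) : CtxDen π D E →
        TmDen (⟨q, .ap, .nil⟩ :: π) (W :: V :: D) (E (.ann q (.ap (valToTm V) (valToTm W))))
    | lt {π D E} (q N e V) : CtxDen π D E →
        TmDen (⟨q, .lt N, e⟩ :: π) (V :: D)
          (E (.ann q (.lets (valToTm V)
            (.er (.sub (toTm N) (.cons .one (.comp (envToSub e) .sh)))))))
    | bg {π D E} (q V) : CtxDen π D E →
        TmDen (⟨q, .bg, .nil⟩ :: π) (V :: D) (E (.ann q (.bang .r (valToTm V))))
    | ins {π D E} (q) (vs : List Val) : vs.length = 9 → CtxDen π D E →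
        TmDen (⟨q, .ins, .nil⟩ :: π) (vs ++ D)
          (E (.ann q (.insp fun i => valToTm (vs.getD (i : ℕ) default))))
end

/-- The trail-collection operator `I(q_ϑ, π, D)` materializing the trail of the
enclosing bang for trail inspection. -/
inductive IRel (nfq : Tr → Tr) : Tr → Stack → Dump → Tr → Prop
  | bg {qθ π D} (q') : IRel nfq qθ (⟨q', .bg, .nil⟩ :: π) D (nfq qθ)
  | apTm {qθ π D res} (q q' M e) :
      IRel nfq (.t q' (.ap qθ q)) π D res →
      IRel nfq qθ (⟨q, .tm M, e⟩ :: ⟨q', .ap, .nil⟩ :: π) D res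
  | apVal {qθ π D res} (q q'' C) :
      IRel nfq (.t q (.ap q'' qθ)) π D res →
      IRel nfq qθ (⟨q, .ap, .nil⟩ :: π) (Val.mk q'' C :: D) res
  | lt {qθ π D res} (q N e) :
      IRel nfq (.t q (.lets qθ .r)) π D res →
      IRel nfq qθ (⟨q, .lt N, e⟩ :: π) D res
  | ins {qθ π D res} (q') (ts : List (Tr × NTm × Env)) (vs : List Val) :
      vs.length + ts.length = 8 →
      IRel nfq (.t q' (.tb fun i =>
          if h : (i : ℕ) < vs.length then (vs.get ⟨i, h⟩).tr
          else if (i : ℕ) = vs.length then qθ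
          else (ts.getD ((i : ℕ) - vs.length - 1) default).1)) π D res →
      IRel nfq qθ (ts.map brTup ++ ⟨q', .ins, .nil⟩ :: π) (vs ++ D) res

/-- The inspection trail of nine evaluated branches, as a term (de Bruijn encoding of
trail constructors as the dangling indices 1..9). -/
def tTT : Tr → NTm
  | .r => .var 0
  | .t q q' => .ap (.ap (.var 1) (tTT q)) (tTT q')
  | .pb => .var 2
  | .pbb => .var 3
  | .ti => .var 4
  | .lam q => .ap (.var 5) (tTT q)
  | .ap q q' => .ap (.ap (.var 6) (tTT q)) (tTT q')
  | .lets q q' => .ap (.ap (.var 7) (tTT q)) (tTT q')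
  | .tb ζ => (List.ofFn fun i => tTT (ζ i)).foldl .ap (.var 8)
  | .ext _ => .var 0

/-- The environment `[r ▷ C₁, …, r ▷ C₉]` of inspection branches. -/
def mkEnv (vs : List Val) : Env := vs.foldr (fun V e => .cons (.mk .r V.clo) e) .nil

/-- Transition relation of the call-by-value abstract machine. -/
inductive MStep (nfq : Tr → Tr) : Config → Config → Prop
  | r1 {π D} (q M N e) :
      MStep nfq (⟨q, .tm (.ap M N), e⟩ :: π, D)
        (⟨.r, .tm M, e⟩ :: ⟨.r, .tm N, e⟩ :: ⟨q, .ap, .nil⟩ :: π, D)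
  | r2 {π D} (q q' C q'' M e) :
      MStep nfq (⟨q, .ap, .nil⟩ :: π, Val.mk q' C :: Val.mk q'' (.lamC M e) :: D)
        (⟨.t q (.t (.ap q'' q') .pb), .tm M, .cons (.mk .r C) e⟩ :: π, D)
  | r3 {π D} (q M e) :
      MStep nfq (⟨q, .tm (.lam M), e⟩ :: π, D) (π, Val.mk q (.lamC M e) :: D)
  | r4 {π D} (q M N e) :
      MStep nfq (⟨q, .tm (.lets M N), e⟩ :: π, D)
        (⟨.r, .tm M, e⟩ :: ⟨q, .lt N, e⟩ :: π, D)
  | r5 {π D} (q N e q' V) :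
      MStep nfq (⟨q, .lt N, e⟩ :: π, Val.mk q' (.bangC V.tr V.clo) :: D)
        (⟨.t q (.t (.lets q' .r) (.t .pbb
            (.ext (.sub (.er (.sub (toTm N) (.cons .one (.comp (envToSub e) .sh))))
              (.cons (valToTm V) .id))))),
          .tm N, .cons V e⟩ :: π, D)
  | r6 {π D} (q q' M e) :
      MStep nfq (⟨q, .tm (.bang q' M), e⟩ :: π, D)
        (⟨.t (toTr q') (.ext (.sub (toTm M) (envToSub e))), .tm M, e⟩ :: ⟨q, .bg, .nil⟩ :: π, D)
  | r7 {π D} (q V) :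
      MStep nfq (⟨q, .bg, .nil⟩ :: π, V :: D) (π, Val.mk q (.bangC V.tr V.clo) :: D)
  | r8 {π D} (q ϑ e) :
      MStep nfq (⟨q, .tm (.insp ϑ), e⟩ :: π, D)
        ((List.ofFn fun i : Fin 9 => Tup.mk .r (.tm (ϑ i)) e) ++ ⟨q, .ins, .nil⟩ :: π, D)
  | r9 {π D} (q) (vs : List Val) (qres : Tr) :
      vs.length = 9 →
      IRel nfq (.t q (.tb fun i => (vs.getD (i : ℕ) default).tr)) π D qres →
      MStep nfq (⟨q, .ins, .nil⟩ :: π, vs ++ D)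
        (⟨.t q (.t (.tb fun i => (vs.getD (i : ℕ) default).tr) .ti),
          .tm (tTT qres), mkEnv vs⟩ :: π, D)
  | r10 {π D} (q n e C) :
      lookupE e n = some C →
      MStep nfq (⟨q, .tm (.var n), e⟩ :: π, D) (π, Val.mk q C :: D)

/-- Closedness conditions on stack tuples. -/
def TupClosed : Tup → Prop
  | ⟨_, .tm M, e⟩ => closedN (envLen e) M ∧ closedEnv e
  | ⟨_, .lt N, e⟩ => closedN (envLen e + 1) N ∧ closedEnv e
  | ⟨_, _, e⟩ => closedEnv e

/-- Valid machine states: well-formed term configurations whose tuples and dump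
values are closed. -/
def Valid (ς : Config) : Prop :=
  WfTm ς.1 ς.2 ∧ (∀ t ∈ ς.1, TupClosed t) ∧ (∀ V ∈ ς.2, closedVal V)

end CAU

/-!
All computations are up to στ-equivalence, on στ-normal forms represented by `Nf`. An explicit
substitution realizing a meta-level substitution `σ` acts on normal forms as `σ` does, and explicit
erasure acts as `Nf.erase`, which commutes with substituting erased normal forms. Hence
⌊(λM̂)[e]⌋ normalizes to an erased abstraction `λB` and `C` to an erased `Z`, and the left-hand side
is στ-equivalent to the redex `app(q,q') ▷ (λB) C`. Its lazy β-contractum carries the trail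
`app(q,q'); ((λ⌈B⌉) ⌈C⌉; β)`, which collapses to `app(q,q'); β` because erased terms extract
trivial trails, and its body `⌊B⌋[⌊C⌋·id]` is identified with `⌊M̂[(r ▷ C)·e]⌋` by composing the
lift of `e` with `⌊C⌋·id`.
-/
theorem Relation.EqvGen.lift {α β : Type*} {r : α → α → Prop} {p : β → β → Prop} {a b : α}
    (f : α → β) (h : ∀ a b, r a b → p (f a) (f b)) (hab : Relation.EqvGen r a b) :
    Relation.EqvGen p (f a) (f b) := by
  induction hab with
  | rel _ _ hr => exact .rel _ _ (h _ _ hr)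
  | refl => exact .refl _
  | symm _ _ _ ih => exact .symm _ _ ih
  | trans _ _ _ _ _ ih₁ ih₂ => exact .trans _ _ _ ih₁ ih₂

theorem Relation.EqvGen.lift_pi {ι α β : Type*} [Fintype ι] [DecidableEq ι]
    {r : α → α → Prop} {p : β → β → Prop} (f : (ι → α) → β)
    (h : ∀ ζ i a, r (ζ i) a → p (f ζ) (f (Function.update ζ i a)))
    {ζ ζ' : ι → α} (hζ : ∀ i, Relation.EqvGen r (ζ i) (ζ' i)) :
    Relation.EqvGen p (f ζ) (f ζ') := by
  suffices ∀ s : Finset ι, Relation.EqvGen p (f ζ) (f fun i => if i ∈ s then ζ' i else ζ i) by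
    simpa using this Finset.univ
  intro s
  induction s using Finset.induction_on with
  | empty => simpa using .refl _
  | insert j s hj ih =>
    set g : ι → α := fun i => if i ∈ s then ζ' i else ζ i
    have hg : (fun i => if i ∈ insert j s then ζ' i else ζ i) = Function.update g j (ζ' j) := by
      funext i
      by_cases hi : i = j
      · subst hi; simp
      · simp [g, hi]
    have hgj : Function.update g j (ζ j) = g := by simp [g, hj]
    refine .trans _ _ _ ih ?_
    rw [hg]
    conv_lhs => rw [← hgj]
    refine (hζ j).lift (fun a => f (Function.update g j a)) fun a b hab => ?_
    simpa using h (Function.update g j a) j b (by simpa using hab)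

namespace CAU

abbrev TmEqv : Tm → Tm → Prop := Relation.EqvGen StepT
abbrev TrEqv : Tr → Tr → Prop := Relation.EqvGen StepQ
abbrev SbEqv : Sb → Sb → Prop := Relation.EqvGen StepS

infix:50 " ≡ₜ " => TmEqv
infix:50 " ≡ₛ " => SbEqv

theorem TmEqv.refl (A : Tm) : A ≡ₜ A := Relation.EqvGen.refl A
theorem TmEqv.trans {A B C : Tm} (h₁ : A ≡ₜ B) (h₂ : B ≡ₜ C) : A ≡ₜ C :=
  Relation.EqvGen.trans _ _ _ h₁ h₂
theorem TmEqv.symm {A B : Tm} (h : A ≡ₜ B) : B ≡ₜ A := Relation.EqvGen.symm _ _ h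
theorem TrEqv.trans {q q' q'' : Tr} (h₁ : TrEqv q q') (h₂ : TrEqv q' q'') : TrEqv q q'' :=
  Relation.EqvGen.trans _ _ _ h₁ h₂
theorem SbEqv.trans {s s' s'' : Sb} (h₁ : s ≡ₛ s') (h₂ : s' ≡ₛ s'') : s ≡ₛ s'' :=
  Relation.EqvGen.trans _ _ _ h₁ h₂

section Congruence

variable {A A' B B' : Tm} {q q' : Tr} {s s' : Sb}

theorem TmEqv.lam (h : A ≡ₜ A') : .lam A ≡ₜ .lam A' := h.lift _ fun _ _ => .lamC

theorem TmEqv.ap (hA : A ≡ₜ A') (hB : B ≡ₜ B') : .ap A B ≡ₜ .ap A' B' :=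
  TmEqv.trans (hA.lift (Tm.ap · B) fun _ _ => .apL B) (hB.lift _ fun _ _ => .apR A')

theorem TmEqv.lets (hA : A ≡ₜ A') (hB : B ≡ₜ B') : .lets A B ≡ₜ .lets A' B' :=
  TmEqv.trans (hA.lift (Tm.lets · B) fun _ _ => .letsL B) (hB.lift _ fun _ _ => .letsR A')

theorem TmEqv.bang (q : Tr) (h : A ≡ₜ A') : .bang q A ≡ₜ .bang q A' :=
  h.lift _ fun _ _ => .bangM q

theorem TmEqv.ann (q : Tr) (h : A ≡ₜ A') : .ann q A ≡ₜ .ann q A' :=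
  h.lift _ fun _ _ => .annM q

theorem TrEqv.ann (A : Tm) (h : TrEqv q q') : .ann q A ≡ₜ .ann q' A :=
  h.lift (Tm.ann · A) fun _ _ => .annQ A

theorem TmEqv.er (h : A ≡ₜ A') : .er A ≡ₜ .er A' := h.lift _ fun _ _ => .erC

theorem TmEqv.sub (hA : A ≡ₜ A') (hs : s ≡ₛ s') : .sub A s ≡ₜ .sub A' s' :=
  TmEqv.trans (hA.lift (Tm.sub · s) fun _ _ => .subM s) (hs.lift _ fun _ _ => .subS A')

theorem TmEqv.insp {ϑ ϑ' : Fin 9 → Tm} (h : ∀ i, ϑ i ≡ₜ ϑ' i) : .insp ϑ ≡ₜ .insp ϑ' :=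
  .lift_pi Tm.insp (fun _ i _ => .inspC i) h

theorem SbEqv.comp (hs : s ≡ₛ s') {t t' : Sb} (ht : t ≡ₛ t') : .comp s t ≡ₛ .comp s' t' :=
  SbEqv.trans (hs.lift (Sb.comp · t) fun _ _ => .compL t) (ht.lift _ fun _ _ => .compR s')

theorem TmEqv.ext (h : A ≡ₜ A') : TrEqv (.ext A) (.ext A') := h.lift _ fun _ _ => .extC

theorem TrEqv.t {q₁ q₁' : Tr} (h : TrEqv q q') (h₁ : TrEqv q₁ q₁') :
    TrEqv (.t q q₁) (.t q' q₁') :=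
  TrEqv.trans (h.lift (Tr.t · q₁) fun _ _ => .tL q₁) (h₁.lift _ fun _ _ => .tR q')

theorem TrEqv.lam (h : TrEqv q q') : TrEqv (.lam q) (.lam q') := h.lift _ fun _ _ => .lamC

theorem TrEqv.ap {q₁ q₁' : Tr} (h : TrEqv q q') (h₁ : TrEqv q₁ q₁') :
    TrEqv (.ap q q₁) (.ap q' q₁') :=
  TrEqv.trans (h.lift (Tr.ap · q₁) fun _ _ => .apL q₁) (h₁.lift _ fun _ _ => .apR q')

theorem TrEqv.lets {q₁ q₁' : Tr} (h : TrEqv q q') (h₁ : TrEqv q₁ q₁') :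
    TrEqv (.lets q q₁) (.lets q' q₁') :=
  TrEqv.trans (h.lift (Tr.lets · q₁) fun _ _ => .letsL q₁) (h₁.lift _ fun _ _ => .letsR q')

theorem TrEqv.tb {ζ ζ' : Fin 9 → Tr} (h : ∀ i, TrEqv (ζ i) (ζ' i)) : TrEqv (.tb ζ) (.tb ζ') :=
  .lift_pi Tr.tb (fun _ i _ => .tbC i) h

end Congruence

def vr : ℕ → Tm
  | 0 => .one
  | n + 1 => .sub .one (pow n)

def liftS (s : Sb) : Sb := .cons .one (.comp s .sh)

theorem pow_comp_sh (n : ℕ) : .comp (pow n) .sh ≡ₛ pow (n + 1) := by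
  induction n with
  | zero => exact .refl _
  | succ n ih => exact SbEqv.trans (.rel _ _ (.compAssoc _ _ _)) (SbEqv.comp (.refl _) ih)

theorem pow_comp_id (n : ℕ) : .comp (pow n) .id ≡ₛ pow n := by
  induction n with
  | zero => exact .rel _ _ .shId
  | succ n ih => exact SbEqv.trans (.rel _ _ (.compAssoc _ _ _)) (SbEqv.comp (.refl _) ih)

theorem sub_vr_sh (n : ℕ) : .sub (vr n) .sh ≡ₜ vr (n + 1) := by
  cases n with
  | zero => exact .refl _
  | succ n => exact TmEqv.trans (.rel _ _ (.subSub _ _ _)) ((TmEqv.refl _).sub (pow_comp_sh n))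

theorem sub_vr_id (n : ℕ) : .sub (vr n) .id ≡ₜ vr n := by
  cases n with
  | zero => exact .rel _ _ .subOneId
  | succ n => exact TmEqv.trans (.rel _ _ (.subSub _ _ _)) ((TmEqv.refl _).sub (pow_comp_id n))

theorem sub_vr_succ (n : ℕ) (s : Sb) : .sub (vr (n + 1)) s ≡ₜ .sub (vr n) (.comp .sh s) :=
  TmEqv.trans (TmEqv.sub (sub_vr_sh n).symm (.refl _)) (.rel _ _ (.subSub _ _ _))

theorem sub_vr_succ_cons (n : ℕ) (A : Tm) (s : Sb) :
    .sub (vr (n + 1)) (.cons A s) ≡ₜ .sub (vr n) s :=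
  TmEqv.trans (sub_vr_succ n _) (TmEqv.sub (.refl _) (.rel _ _ (.shCons A s)))

theorem sub_vr_succ_liftS (n : ℕ) (s : Sb) :
    .sub (vr (n + 1)) (liftS s) ≡ₜ .sub (.sub (vr n) s) .sh :=
  TmEqv.trans (sub_vr_succ n _) <|
    TmEqv.trans ((TmEqv.refl _).sub (.rel _ _ (.shCons _ _)))
      (TmEqv.symm (.rel _ _ (.subSub _ _ _)))

theorem ap_ann_ann (q q' : Tr) (A B : Tm) :
    .ap (.ann q A) (.ann q' B) ≡ₜ .ann (.ap q q') (.ap A B) := by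
  refine TmEqv.trans (.rel _ _ (.apAnnL _ _ _)) ?_
  refine TmEqv.trans (.rel _ _ (.annM _ (.apAnnR _ _ _))) ?_
  refine TmEqv.trans (.rel _ _ (.annAnn _ _ _)) (TrEqv.ann _ ?_)
  exact TrEqv.trans (.rel _ _ (.tAp _ _ _ _))
    (TrEqv.ap (.rel _ _ (.tReflR q)) (.rel _ _ (.tReflL q')))

theorem beta_trail_equiv {A B : Tm} (hA : TrEqv (.ext A) .r) (hB : TrEqv (.ext B) .r) :
    TrEqv (.t (.ap (.lam (.ext A)) (.ext B)) .pb) .pb := by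
  have hrefl : TrEqv (.ap (.lam .r) .r) .r :=
    TrEqv.trans (TrEqv.ap (.rel _ _ .lamRefl) (.refl _)) (.rel _ _ .apRefl)
  exact TrEqv.trans ((hA.lam.ap hB).t (.refl _))
    (TrEqv.trans (hrefl.t (.refl _)) (.rel _ _ (.tReflL _)))

/-- στ-normal forms: pure terms, except that trails are CAU⁻σ trails, as in machine values. -/
inductive Nf : Type
  | var : ℕ → Nf
  | lam : Nf → Nf
  | ap : Nf → Nf → Nf
  | lets : Nf → Nf → Nf
  | bang : Tr → Nf → Nf
  | ann : Tr → Nf → Nf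
  | insp : (Fin 9 → Nf) → Nf

namespace Nf

def toTm : Nf → Tm
  | var n => vr n
  | lam A => .lam A.toTm
  | ap A B => .ap A.toTm B.toTm
  | lets A B => .lets A.toTm B.toTm
  | bang q A => .bang q A.toTm
  | ann q A => .ann q A.toTm
  | insp ϑ => .insp fun i => (ϑ i).toTm

def ofNTm : NTm → Nf
  | .var n => var n
  | .lam M => lam (ofNTm M)
  | .ap M N => ap (ofNTm M) (ofNTm N)
  | .lets M N => lets (ofNTm M) (ofNTm N)
  | .bang q M => bang (toTr q) (ofNTm M)
  | .ann q M => ann (toTr q) (ofNTm M)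
  | .insp ϑ => insp fun i => ofNTm (ϑ i)

theorem toTm_ofNTm (M : NTm) : (ofNTm M).toTm = CAU.toTm M := by
  induction M with
  | var n => cases n <;> rfl
  | _ => simp_all [ofNTm, toTm, CAU.toTm]

def upRen (f : ℕ → ℕ) : ℕ → ℕ
  | 0 => 0
  | n + 1 => f n + 1

def rename (f : ℕ → ℕ) : Nf → Nf
  | var n => var (f n)
  | lam A => lam (A.rename (upRen f))
  | ap A B => ap (A.rename f) (B.rename f)
  | lets A B => lets (A.rename f) (B.rename (upRen f))
  | bang q A => bang q (A.rename f)
  | ann q A => ann q (A.rename f)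
  | insp ϑ => insp fun i => (ϑ i).rename f

def up (σ : ℕ → Nf) : ℕ → Nf
  | 0 => var 0
  | n + 1 => (σ n).rename Nat.succ

def scons (A : Nf) (σ : ℕ → Nf) : ℕ → Nf
  | 0 => A
  | n + 1 => σ n

def subst (σ : ℕ → Nf) : Nf → Nf
  | var n => σ n
  | lam A => lam (A.subst (up σ))
  | ap A B => ap (A.subst σ) (B.subst σ)
  | lets A B => lets (A.subst σ) (B.subst (up σ))
  | bang q A => bang q (A.subst σ)
  | ann q A => ann q (A.subst σ)
  | insp ϑ => insp fun i => (ϑ i).subst σ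

def erase : Nf → Nf
  | var n => var n
  | lam A => lam A.erase
  | ap A B => ap A.erase B.erase
  | lets A B => lets A.erase B.erase
  | bang q A => bang q A
  | ann _ A => A.erase
  | insp ϑ => insp fun i => (ϑ i).erase

theorem up_var_comp (f : ℕ → ℕ) : up (fun n => var (f n)) = fun n => var (upRen f n) := by
  funext n; cases n <;> rfl

theorem subst_var_comp (f : ℕ → ℕ) (A : Nf) : A.subst (fun n => var (f n)) = A.rename f := by
  induction A generalizing f <;> simp_all [subst, rename, up_var_comp]

theorem subst_var (A : Nf) : A.subst var = A := by
  have hup : up var = var := by funext n; cases n <;> rfl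
  induction A <;> simp_all [subst]

theorem up_comp_upRen (τ : ℕ → Nf) (f : ℕ → ℕ) :
    (fun n => up τ (upRen f n)) = up (fun n => τ (f n)) := by
  funext n; cases n <;> rfl

theorem rename_subst (f : ℕ → ℕ) (τ : ℕ → Nf) (A : Nf) :
    (A.rename f).subst τ = A.subst (fun n => τ (f n)) := by
  induction A generalizing f τ <;> simp_all [subst, rename, up_comp_upRen]

theorem erase_rename (f : ℕ → ℕ) (A : Nf) : (A.rename f).erase = A.erase.rename f := by
  induction A generalizing f <;> simp_all [erase, rename]

theorem erase_erase (A : Nf) : A.erase.erase = A.erase := by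
  induction A <;> simp_all [erase]

theorem erase_subst {τ : ℕ → Nf} (hτ : ∀ n, (τ n).erase = τ n) (A : Nf) :
    A.erase.subst τ = (A.subst τ).erase := by
  induction A generalizing τ with
  | var n => exact (hτ n).symm
  | lam A ih | lets A B ihA ih =>
    have hup : ∀ n, (up τ n).erase = up τ n := by
      intro n; cases n
      · rfl
      · simp only [up, erase_rename, hτ]
    simp_all [erase, subst]
  | _ => simp_all [erase, subst]

end Nf

section NormalForms

open Nf

def Realizes (σ : ℕ → Nf) (s : Sb) : Prop := ∀ n, .sub (vr n) s ≡ₜ (σ n).toTm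

/- Stated for any lift-closed family of realizing pairs so that it also covers the renamings
needed to lift a substitution. -/
theorem sub_toTm_of_closed (P : (ℕ → Nf) → Sb → Prop)
    (realizes : ∀ σ s, P σ s → Realizes σ s) (lift : ∀ σ s, P σ s → P (up σ) (liftS s))
    (A : Nf) {σ : ℕ → Nf} {s : Sb} (h : P σ s) : .sub A.toTm s ≡ₜ (A.subst σ).toTm := by
  induction A generalizing σ s with
  | var n => exact realizes σ s h n
  | lam A ih => exact TmEqv.trans (.rel _ _ (.subLam _ _)) (ih (lift σ s h)).lam
  | ap A B ihA ihB => exact TmEqv.trans (.rel _ _ (.subAp _ _ _)) ((ihA h).ap (ihB h))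
  | lets A B ihA ihB =>
    exact TmEqv.trans (.rel _ _ (.subLets _ _ _)) ((ihA h).lets (ihB (lift σ s h)))
  | bang q A ih => exact TmEqv.trans (.rel _ _ (.subBang _ _ _)) ((ih h).bang q)
  | ann q A ih => exact TmEqv.trans (.rel _ _ (.subAnn _ _ _)) ((ih h).ann q)
  | insp ϑ ih => exact TmEqv.trans (.rel _ _ (.subInsp _ _)) (.insp fun i => ih i h)

theorem sub_toTm_rename {f : ℕ → ℕ} {s : Sb} (hs : ∀ n, .sub (vr n) s ≡ₜ vr (f n)) (A : Nf) :
    .sub A.toTm s ≡ₜ (A.rename f).toTm := by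
  rw [← subst_var_comp]
  refine sub_toTm_of_closed (fun σ s => ∃ f, σ = (fun n => var (f n)) ∧
      ∀ n, .sub (vr n) s ≡ₜ vr (f n)) ?_ ?_ A ⟨f, rfl, hs⟩
  · rintro _ s ⟨f, rfl, hs⟩
    exact hs
  · rintro _ s ⟨f, rfl, hs⟩
    refine ⟨upRen f, up_var_comp f, fun n => ?_⟩
    cases n with
    | zero => exact .rel _ _ (.subOneCons _ _)
    | succ n =>
      exact TmEqv.trans (sub_vr_succ_liftS n s) <|
        TmEqv.trans ((hs n).sub (.refl _)) (sub_vr_sh (f n))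

theorem Realizes.up {σ : ℕ → Nf} {s : Sb} (h : Realizes σ s) : Realizes (up σ) (liftS s)
  | 0 => .rel _ _ (.subOneCons _ _)
  | n + 1 =>
    TmEqv.trans (sub_vr_succ_liftS n s) <|
      TmEqv.trans ((h n).sub (.refl _)) (sub_toTm_rename sub_vr_sh (σ n))

theorem sub_toTm_subst {σ : ℕ → Nf} {s : Sb} (h : Realizes σ s) (A : Nf) :
    .sub A.toTm s ≡ₜ (A.subst σ).toTm :=
  sub_toTm_of_closed Realizes (fun _ _ => id) (fun _ _ => Realizes.up) A h

theorem realizes_id : Realizes var .id := sub_vr_id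

theorem Realizes.cons {σ : ℕ → Nf} {s : Sb} {A : Tm} {Z : Nf} (hA : A ≡ₜ Z.toTm)
    (h : Realizes σ s) : Realizes (scons Z σ) (.cons A s)
  | 0 => TmEqv.trans (.rel _ _ (.subOneCons _ _)) hA
  | n + 1 => TmEqv.trans (sub_vr_succ_cons n A s) (h n)

theorem Realizes.comp {σ τ : ℕ → Nf} {t s : Sb} (ht : Realizes σ t) (hs : Realizes τ s) :
    Realizes (fun n => (σ n).subst τ) (.comp t s) := fun n =>
  TmEqv.trans (TmEqv.symm (.rel _ _ (.subSub _ _ _))) <|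
    TmEqv.trans ((ht n).sub (.refl _)) (sub_toTm_subst hs (σ n))

theorem er_toTm (A : Nf) : .er A.toTm ≡ₜ A.erase.toTm := by
  induction A with
  | var n => cases n with
    | zero => exact .rel _ _ .erOne
    | succ n => exact .rel _ _ (.erOneSh n)
  | lam A ih => exact TmEqv.trans (.rel _ _ (.erLam _)) ih.lam
  | ap A B ihA ihB => exact TmEqv.trans (.rel _ _ (.erAp _ _)) (ihA.ap ihB)
  | lets A B ihA ihB => exact TmEqv.trans (.rel _ _ (.erLets _ _)) (ihA.lets ihB)
  | bang q A => exact .rel _ _ (.erBang _ _)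
  | ann q A ih => exact TmEqv.trans (.rel _ _ (.erAnn _ _)) ih
  | insp ϑ ih => exact TmEqv.trans (.rel _ _ (.erInsp _)) (.insp ih)

theorem er_toTm_erase (A : Nf) : .er A.erase.toTm ≡ₜ A.erase.toTm := by
  simpa only [erase_erase] using er_toTm A.erase

theorem ext_toTm_erase (A : Nf) : TrEqv (.ext A.erase.toTm) .r := by
  induction A with
  | var n => cases n with
    | zero => exact .rel _ _ .extOne
    | succ n => exact .rel _ _ (.extOneSh n)
  | lam A ih =>
    exact TrEqv.trans (.rel _ _ (.extLam _)) (TrEqv.trans ih.lam (.rel _ _ .lamRefl))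
  | ap A B ihA ihB =>
    exact TrEqv.trans (.rel _ _ (.extAp _ _)) (TrEqv.trans (ihA.ap ihB) (.rel _ _ .apRefl))
  | lets A B ihA ihB =>
    exact TrEqv.trans (.rel _ _ (.extLets _ _))
      (TrEqv.trans (ihA.lets ihB) (.rel _ _ .letsRefl))
  | bang q A => exact .rel _ _ (.extBang _ _)
  | ann q A ih => exact ih
  | insp ϑ ih =>
    exact TrEqv.trans (.rel _ _ (.extInsp _)) (TrEqv.trans (.tb ih) (.rel _ _ .tbRefl))

theorem sub_toTm_erase {τ : ℕ → Nf} {s : Sb} (hs : Realizes τ s) (hτ : ∀ n, (τ n).erase = τ n)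
    (A : Nf) : .sub A.erase.toTm s ≡ₜ .er (.sub A.toTm s) := by
  have h := sub_toTm_subst hs A.erase
  rw [erase_subst hτ] at h
  exact TmEqv.trans h (TmEqv.trans (er_toTm _).symm (sub_toTm_subst hs A).symm.er)

theorem up_subst_scons (σ : ℕ → Nf) (Z : Nf) :
    (fun n => (up σ n).subst (scons Z var)) = scons Z σ := by
  funext n
  cases n with
  | zero => rfl
  | succ n => exact (rename_subst _ _ _).trans (subst_var _)

theorem sub_er_subst_up_cons {σ : ℕ → Nf} {u : Sb} (hu : Realizes σ u) {Z : Nf}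
    (hZ : Z.erase = Z) {N V : Tm} (hN : N ≡ₜ Z.toTm) (hV : V ≡ₜ Z.toTm) (A : Nf) :
    .sub (.er ((A.subst (up σ)).erase.toTm)) (.cons (.er N) .id) ≡ₜ
      .er (.sub A.toTm (.cons V u)) := by
  have hZN : .er N ≡ₜ Z.toTm := TmEqv.trans hN.er (by simpa only [hZ] using er_toTm_erase Z)
  have hs : Realizes (scons Z var) (.cons (.er N) .id) := realizes_id.cons hZN
  have hs_erased : ∀ n, (scons Z var n).erase = scons Z var n
    | 0 => hZ
    | _ + 1 => rfl
  have hcomp : Realizes (scons Z σ) (.comp (liftS u) (.cons (.er N) .id)) := by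
    simpa only [up_subst_scons] using hu.up.comp hs
  calc .sub (.er ((A.subst (up σ)).erase.toTm)) (.cons (.er N) .id)
      _ ≡ₜ .sub ((A.subst (up σ)).erase.toTm) (.cons (.er N) .id) :=
        (er_toTm_erase _).sub (.refl _)
      _ ≡ₜ .er (.sub (A.subst (up σ)).toTm (.cons (.er N) .id)) := sub_toTm_erase hs hs_erased _
      _ ≡ₜ .er (.sub (.sub A.toTm (liftS u)) (.cons (.er N) .id)) :=
        ((sub_toTm_subst hu.up A).symm.sub (.refl _)).er
      _ ≡ₜ .er (A.subst (scons Z σ)).toTm :=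
        (TmEqv.trans (.rel _ _ (.subSub _ _ _)) (sub_toTm_subst hcomp A)).er
      _ ≡ₜ .er (.sub A.toTm (.cons V u)) := (sub_toTm_subst (hu.cons hV) A).symm.er

theorem cloToTm_lamC_equiv {σ : ℕ → Nf} {e : Env} (he : Realizes σ (envToSub e)) (M : NTm) :
    cloToTm (.lamC M e) ≡ₜ .lam ((ofNTm M).subst (up σ)).erase.toTm := by
  have h := sub_toTm_subst he (ofNTm (.lam M))
  rw [toTm_ofNTm] at h
  exact TmEqv.trans h.er (er_toTm _)

mutual

theorem exists_erased_cloToTm_equiv : ∀ C : Clo, ∃ Z : Nf, Z.erase = Z ∧ cloToTm C ≡ₜ Z.toTm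
  | .lamC M e =>
    have ⟨σ, he⟩ := exists_realizes_envToSub e
    ⟨lam ((ofNTm M).subst (up σ)).erase, by simp only [erase, erase_erase],
      cloToTm_lamC_equiv he M⟩
  | .bangC q C =>
    have ⟨Z, _, hC⟩ := exists_erased_cloToTm_equiv C
    ⟨bang q Z, rfl, hC.bang q⟩

theorem exists_realizes_envToSub : ∀ e : Env, ∃ σ, Realizes σ (envToSub e)
  | .nil => ⟨var, realizes_id⟩
  | .cons (.mk q C) e =>
    have ⟨Z, _, hC⟩ := exists_erased_cloToTm_equiv C
    have ⟨_, he⟩ := exists_realizes_envToSub e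
    ⟨_, he.cons (Z := ann q Z) (hC.ann q)⟩

end

end NormalForms

/-- Admissible beta rule for machine values:
`(q ▷ ⌊(λM̂)[e]⌋) (q' ▷ C)  ↠  t(app(q,q');β) ▷ ⌊M̂[(r ▷ C)·e]⌋`. -/
theorem machine_beta_admissible (nfq : Tr → Tr) (hq : IsNFQ nfq) :
    ∀ (q q' : Tr) (M : NTm) (e : Env) (C : Clo),
      Relation.ReflTransGen (SRed nfq)
        (.ap (.ann q (cloToTm (.lamC M e))) (.ann q' (cloToTm C)))
        (.ann (.t (.ap q q') .pb)
          (.er (.sub (toTm M) (.cons (valToTm (.mk .r C)) (envToSub e))))) := by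
  intro q q' M e C
  obtain ⟨σ, he⟩ := exists_realizes_envToSub e
  obtain ⟨Z, hZ, hC⟩ := exists_erased_cloToTm_equiv C
  set B := ((Nf.ofNTm M).subst (Nf.up σ)).erase
  have redex : .ap (.ann q (cloToTm (.lamC M e))) (.ann q' (cloToTm C)) ≡ₜ
      .ann (.ap q q') (.ap (.lam B.toTm) (cloToTm C)) :=
    TmEqv.trans (((cloToTm_lamC_equiv he M).ann q).ap (.refl _)) (ap_ann_ann _ _ _ _)
  have trail : TrEqv (.t (.ap (.lam (.ext B.toTm)) (.ext (cloToTm C))) .pb) .pb :=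
    beta_trail_equiv (ext_toTm_erase _) (TrEqv.trans hC.ext (hZ ▸ ext_toTm_erase Z))
  have body := sub_er_subst_up_cons he hZ hC (TmEqv.trans (.rel _ _ (.annRefl _)) hC)
    (Nf.ofNTm M)
  rw [Nf.toTm_ofNTm] at body
  refine .head (Or.inr redex) (.head (Or.inl (.ann _ (.beta _ _))) (.single (Or.inr ?_)))
  exact TmEqv.trans (.rel _ _ (.annAnn _ _ _))
    (TmEqv.trans (TrEqv.ann _ (TrEqv.t (.refl _) trail)) (body.ann _))

end CAU
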